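/- arXiv:2504.04364 — 2 statements merged into one kernel-verified Lean document; each statement's English description precedes it below -/
import Mathlib

section
/- If H is a disjoint union of paths whose longest path has n1(H) vertices and second-longest has n2(H) vertices, and K1 ∨ H contains no t vertex-disjoint copies of P_l, then n1(H) + n2(H) ≤ (t−1)l + l − 2. -/
open SimpleGraph

/-- `G` contains a copy of `F` as a subgraph: an injective graph homomorphism. -/
def ContainsCopy {α β : Type*} (F : SimpleGraph α) (G : SimpleGraph β) : Prop :=
  ∃ f : α → β, Function.Injective f ∧ ∀ a b, F.Adj a b → G.Adj (f a) (f b)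

/-- The cone over a graph: a new apex vertex joined to every vertex of `H`.
`cone H = K1 ∨ H`, and `cone (cone H) = K2 ∨ H`. -/
def cone {β : Type*} (H : SimpleGraph β) : SimpleGraph (Option β) :=
  SimpleGraph.fromRel (fun x y =>
    x = none ∨ ∃ a b, x = some a ∧ y = some b ∧ H.Adj a b)

/-- The disjoint union of paths with orders `n 0, n 1, n 2, …`:
for each `i`, the vertices `(i, 0), …, (i, n i - 1)` form a path. -/
def pathsUnion (n : ℕ → ℕ) : SimpleGraph (ℕ × ℕ) :=
  SimpleGraph.fromRel (fun x y => x.1 = y.1 ∧ x.2 + 1 = y.2 ∧ y.2 < n x.1)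

/-- `t` pairwise vertex-disjoint copies of the path `P_l`. -/
def tPaths (t l : ℕ) : SimpleGraph (Fin t × Fin l) :=
  SimpleGraph.fromRel (fun x y => x.1 = y.1 ∧ (x.2 : ℕ) + 1 = (y.2 : ℕ))

/-- The spider (starlike tree) with `t` branches each having `m` vertices
(besides the common center). -/
def spider (t m : ℕ) : SimpleGraph (Option (Fin t × Fin m)) :=
  SimpleGraph.fromRel (fun x y =>
    (x = none ∧ ∃ p : Fin t × Fin m, y = some p ∧ (p.2 : ℕ) = 0) ∨
    (∃ p q : Fin t × Fin m, x = some p ∧ y = some q ∧ p.1 = q.1 ∧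
      (p.2 : ℕ) + 1 = (q.2 : ℕ)))

/-- `F` is a minor of `G`: branch sets realization. -/
def IsMinor {α β : Type*} (F : SimpleGraph α) (G : SimpleGraph β) : Prop :=
  ∃ B : α → G.Subgraph,
    (∀ a, (B a).verts.Nonempty) ∧
    (∀ a, (B a).Connected) ∧
    (∀ a a', a ≠ a' → Disjoint (B a).verts (B a').verts) ∧
    (∀ a a', F.Adj a a' → ∃ u ∈ (B a).verts, ∃ v ∈ (B a').verts, G.Adj u v)

/-- Planarity, via Wagner's forbidden-minor characterization. -/
def IsPlanar {β : Type*} (G : SimpleGraph β) : Prop :=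
  ¬ IsMinor (⊤ : SimpleGraph (Fin 5)) G ∧
  ¬ IsMinor (completeBipartiteGraph (Fin 3) (Fin 3)) G

/-- Outerplanarity, via the forbidden-minor characterization. -/
def IsOuterplanar {β : Type*} (G : SimpleGraph β) : Prop :=
  ¬ IsMinor (⊤ : SimpleGraph (Fin 4)) G ∧
  ¬ IsMinor (completeBipartiteGraph (Fin 2) (Fin 3)) G

/-- The spectral radius of a finite graph: the largest (adjacency) eigenvalue. -/
noncomputable def specRad {V : Type*} [Fintype V] (G : SimpleGraph V) : ℝ :=
  haveI := Classical.decRel G.Adj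
  sSup {μ : ℝ | ∃ x : V → ℝ, x ≠ 0 ∧ (G.adjMatrix ℝ).mulVec x = μ • x}


/-!
Traversing the path `i` of `H = pathsUnion n` towards its first vertex, stepping to the apex
and then traversing the path `j` gives a path on `n i + 1 + n j` vertices in `K1 ∨ H`.
A path on `t * l` vertices contains `t P_l`, so if `K1 ∨ H` is `t P_l`-free then
`n 0 + 1 + n 1 < t * l`.
-/

lemma containsCopy_iff_isContained {α β : Type*} {F : SimpleGraph α} {G : SimpleGraph β} :
    ContainsCopy F G ↔ F ⊑ G :=
  ⟨fun ⟨f, hinj, hadj⟩ => ⟨⟨⟨f, hadj _ _⟩, hinj⟩⟩,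
    fun ⟨f⟩ => ⟨f, f.injective, fun _ _ => f.toHom.map_adj⟩⟩

lemma cone_adj_some_some {β : Type*} {H : SimpleGraph β} {a b : β} (h : H.Adj a b) :
    (cone H).Adj (some a) (some b) :=
  (fromRel_adj ..).2 ⟨by simpa using h.ne, .inl (.inr ⟨a, b, rfl, rfl, h⟩)⟩

lemma cone_adj_none_some {β : Type*} (H : SimpleGraph β) (b : β) :
    (cone H).Adj none (some b) :=
  (fromRel_adj ..).2 ⟨by simp, .inl (.inl rfl)⟩

lemma pathsUnion_adj_succ (n : ℕ → ℕ) {i k : ℕ} (h : k + 1 < n i) :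
    (pathsUnion n).Adj (i, k) (i, k + 1) :=
  (fromRel_adj ..).2 ⟨by simp, .inl ⟨rfl, rfl, h⟩⟩

lemma pathGraph_isContained_of_adj_succ {β : Type*} {G : SimpleGraph β} {m : ℕ}
    (f : Fin m → β) (hf : Function.Injective f)
    (hadj : ∀ u v : Fin m, u.val + 1 = v.val → G.Adj (f u) (f v)) : pathGraph m ⊑ G :=
  ⟨⟨⟨f, fun {u v} h => (pathGraph_adj.1 h).elim (hadj u v) fun h' => (hadj v u h').symm⟩, hf⟩⟩

lemma pathGraph_isContained_of_le {m m' : ℕ} (h : m ≤ m') : pathGraph m ⊑ pathGraph m' :=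
  pathGraph_isContained_of_adj_succ (Fin.castLE h) (Fin.castLE_injective h) fun _ _ huv =>
    pathGraph_adj.2 (.inl huv)

lemma tPaths_isContained_pathGraph (t l : ℕ) : tPaths t l ⊑ pathGraph (t * l) := by
  refine ⟨⟨⟨finProdFinEquiv, fun {x y} hxy => ?_⟩, finProdFinEquiv.injective⟩⟩
  obtain ⟨-, ⟨h₁, h₂⟩ | ⟨h₁, h₂⟩⟩ := (fromRel_adj ..).1 hxy <;>
  · rw [pathGraph_adj, finProdFinEquiv_apply_val, finProdFinEquiv_apply_val, h₁]
    omega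

/-- The `k`-th vertex of the path that runs down the path `i` of `pathsUnion n`,
through the apex `none`, and up the path `j`. -/
def conePathVertex (n : ℕ → ℕ) (i j k : ℕ) : Option (ℕ × ℕ) :=
  if k < n i then some (i, n i - 1 - k)
  else if k = n i then none
  else some (j, k - (n i + 1))

lemma conePathVertex_injective (n : ℕ → ℕ) {i j : ℕ} (hij : i ≠ j) :
    Function.Injective (conePathVertex n i j) := by
  intro k k' h
  unfold conePathVertex at h
  split_ifs at h <;> grind

lemma conePathVertex_adj_succ (n : ℕ → ℕ) (i j : ℕ) {k : ℕ} (hk : k + 1 < n i + 1 + n j) :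
    (cone (pathsUnion n)).Adj (conePathVertex n i j k) (conePathVertex n i j (k + 1)) := by
  unfold conePathVertex
  rcases Nat.lt_trichotomy (k + 1) (n i) with h | h | h
  · rw [if_pos h, if_pos (by omega), show n i - 1 - k = n i - 1 - (k + 1) + 1 by omega]
    exact (cone_adj_some_some (pathsUnion_adj_succ n (by omega))).symm
  · rw [if_pos (by omega), if_neg (by omega), if_pos h, show n i - 1 - k = 0 by omega]
    exact (cone_adj_none_some _ _).symm
  · rcases Nat.lt_or_ge k (n i + 1) with h' | h'
    · rw [if_neg (by omega), if_pos (by omega), if_neg (by omega), if_neg (by omega),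
        show k + 1 - (n i + 1) = 0 by omega]
      exact cone_adj_none_some _ _
    · rw [if_neg (by omega), if_neg (by omega), if_neg (by omega), if_neg (by omega),
        show k + 1 - (n i + 1) = k - (n i + 1) + 1 by omega]
      exact cone_adj_some_some (pathsUnion_adj_succ n (by omega))

lemma pathGraph_isContained_cone_pathsUnion (n : ℕ → ℕ) {i j : ℕ} (hij : i ≠ j) :
    pathGraph (n i + 1 + n j) ⊑ cone (pathsUnion n) :=
  pathGraph_isContained_of_adj_succ (fun k => conePathVertex n i j k)
    ((conePathVertex_injective n hij).comp Fin.val_injective) fun u v huv => by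
      simpa only [← huv] using conePathVertex_adj_succ n i j (huv ▸ v.isLt)

lemma tPaths_isContained_cone_pathsUnion (n : ℕ → ℕ) {i j t l : ℕ} (hij : i ≠ j)
    (h : t * l ≤ n i + 1 + n j) : tPaths t l ⊑ cone (pathsUnion n) :=
  (tPaths_isContained_pathGraph t l).trans <| (pathGraph_isContained_of_le h).trans <|
    pathGraph_isContained_cone_pathsUnion n hij

theorem K1_join_linearForest_tPl_free_general (t l : ℕ)
    (n : ℕ → ℕ)
    (hfree : ¬ ContainsCopy (tPaths t l) (cone (pathsUnion n))) :
    n 0 + n 1 ≤ (t - 1) * l + l - 2 := by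
  by_contra hlong
  have hsize : t * l ≤ n 0 + 1 + n 1 := by
    have : t * l ≤ (t - 1) * l + l := by cases t <;> simp [add_mul]
    omega
  exact hfree <| containsCopy_iff_isContained.2 <|
    tPaths_isContained_cone_pathsUnion n zero_ne_one hsize

theorem K1_join_linearForest_tPl_free (t l : ℕ) (ht : 2 ≤ t) (hl : 3 ≤ l)
    (n : ℕ → ℕ) (hmono : Antitone n)
    (hfree : ¬ ContainsCopy (tPaths t l) (cone (pathsUnion n))) :
    n 0 + n 1 ≤ (t - 1) * l + l - 2 :=
  K1_join_linearForest_tPl_free_general t l n hfree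
end

section
/- Let H be a disjoint union of paths, all of order at most l − 1, with at least four components of orders n1 ≥ n2 ≥ n3 ≥ n4 such that n1 + n2 ≥ l − 1 and n3 + n4 ≥ l − 1. Then K2 ∨ H contains two vertex-disjoint copies of P_l. -/
open SimpleGraph

/-!
Each copy of `P_l` runs along one long path of `H`, jumps to a vertex of `K2`, and continues
along a second path of `H`: `P_{n₁}`, `u'`, `P_{n₂}` gives a path on `n₁ + 1 + n₂ ≥ l` vertices,
and likewise `P_{n₃}`, `u''`, `P_{n₄}`. The two copies use different components of `H` and
different vertices of `K2`, so they are disjoint.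
-/

namespace SimpleGraph

open Function Set

variable {β β' : Type*}

lemma containsCopy_tPaths_of_copies {G : SimpleGraph β} {t l : ℕ}
    (f : Fin t → Copy (pathGraph l) G)
    (hdisj : Pairwise fun i j ↦ Disjoint (range (f i)) (range (f j))) :
    ContainsCopy (tPaths t l) G := by
  refine ⟨fun p ↦ f p.1 p.2, ?_, ?_⟩
  · rintro ⟨i, k⟩ ⟨j, m⟩ h
    obtain rfl : i = j := by
      by_contra hij
      exact disjoint_range_iff.1 (hdisj hij) k m h
    exact congrArg _ ((f i).injective h)
  · rintro ⟨i, k⟩ ⟨j, m⟩ h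
    obtain ⟨-, ⟨hij, hkm⟩ | ⟨hij, hkm⟩⟩ := (fromRel_adj _ _ _).1 h <;>
      dsimp only at hij hkm ⊢ <;> subst hij <;>
      exact (f _).toHom.map_adj (pathGraph_adj.2 (by omega))

def Copy.pathGraphOfAdjSucc {G : SimpleGraph β} {l : ℕ} (f : ℕ → β) (hf : Injective f)
    (hadj : ∀ k, k + 1 < l → G.Adj (f k) (f (k + 1))) : Copy (pathGraph l) G :=
  Hom.toCopy
    { toFun := fun k ↦ f k
      map_rel' := fun {k m} h ↦ by
        rcases pathGraph_adj.1 h with h | h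
        · rw [← h]; exact hadj k (h ▸ m.isLt)
        · rw [← h]; exact (hadj m (h ▸ k.isLt)).symm }
    (hf.comp Fin.val_injective)

section Cone

variable {H : SimpleGraph β} {H' : SimpleGraph β'} {a b : β}

@[simp]
lemma cone_adj_some_some : (cone H).Adj (some a) (some b) ↔ H.Adj a b := by
  simpa [cone, fromRel_adj, H.adj_comm b a] using fun h : H.Adj a b ↦ h.ne

@[simp]
lemma cone_adj_none_some : (cone H).Adj none (some a) := by
  simp [cone, fromRel_adj]

@[simp]
lemma cone_adj_some_none : (cone H).Adj (some a) none :=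
  cone_adj_none_some.symm

variable (H) in
def coneEmbedding : H ↪g cone H where
  toFun := some
  inj' := Option.some_injective _
  map_rel_iff' := cone_adj_some_some

def Copy.coneMap (f : Copy H H') : Copy (cone H) (cone H') :=
  Hom.toCopy
    { toFun := Option.map f
      map_rel' := fun {x y} h ↦ by
        cases x <;> cases y
        · exact absurd h (cone H).irrefl
        · exact cone_adj_none_some
        · exact cone_adj_some_none
        · exact cone_adj_some_some.2 (f.toHom.map_adj (cone_adj_some_some.1 h)) }
    (Option.map_injective f.injective)

end Cone

lemma pathsUnion_adj {n : ℕ → ℕ} {i k k' : ℕ} (hk : k + 1 = k') (hk' : k' < n i) :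
    (pathsUnion n).Adj (i, k) (i, k') :=
  (fromRel_adj _ _ _).2 ⟨by simp [← hk], Or.inl ⟨rfl, hk, hk'⟩⟩

def apexPath (n : ℕ → ℕ) (i j k : ℕ) : Option (ℕ × ℕ) :=
  if k < n i then some (i, k) else if k = n i then none else some (j, k - n i - 1)

variable {n : ℕ → ℕ} {i j : ℕ}

lemma apexPath_adj_succ {k : ℕ} (hk : k + 1 < n i + 1 + n j) :
    (cone (pathsUnion n)).Adj (apexPath n i j k) (apexPath n i j (k + 1)) := by
  unfold apexPath
  split_ifs <;> first
    | omega
    | exact cone_adj_some_some.2 (pathsUnion_adj (by omega) (by omega))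
    | simp

lemma apexPath_injective (hij : i ≠ j) : Injective (apexPath n i j) := by
  intro k m h
  unfold apexPath at h
  split_ifs at h <;> simp only [Option.some.injEq, Prod.mk.injEq] at h <;> omega

lemma apexPath_fst {k : ℕ} {x : ℕ × ℕ} (h : apexPath n i j k = some x) : x.1 = i ∨ x.1 = j := by
  unfold apexPath at h
  split_ifs at h <;> simp only [Option.some.injEq] at h <;> simp [← h]

def apexPathCopy (hij : i ≠ j) {l : ℕ} (hl : l - 1 ≤ n i + n j) :
    Copy (pathGraph l) (cone (pathsUnion n)) :=
  .pathGraphOfAdjSucc (apexPath n i j) (apexPath_injective hij)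
    fun _ hk ↦ apexPath_adj_succ (by omega)

end SimpleGraph

theorem K2_join_contains_two_disjoint_paths_general (l : ℕ) (n : ℕ → ℕ)
    (h12 : l - 1 ≤ n 0 + n 1) (h34 : l - 1 ≤ n 2 + n 3) :
    ContainsCopy (tPaths 2 l) (cone (cone (pathsUnion n))) := by
  let P : Fin 2 → Copy (pathGraph l) (cone (cone (pathsUnion n))) :=
    ![(coneEmbedding _).toCopy.coneMap.comp (apexPathCopy (by decide) h12),
      (coneEmbedding _).toCopy.comp (apexPathCopy (by decide) h34)]
  have hdisj : Disjoint (Set.range (P 0)) (Set.range (P 1)) := by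
    refine Set.disjoint_range_iff.2 fun a b hab ↦ ?_
    change Option.map some (apexPath n 0 1 a) = some (apexPath n 2 3 b) at hab
    cases h : apexPath n 0 1 a with
    | none => simp [h] at hab
    | some x =>
      rw [h, Option.map_some, Option.some_inj] at hab
      have hx₀₁ := apexPath_fst h
      have hx₂₃ := apexPath_fst hab.symm
      omega
  refine containsCopy_tPaths_of_copies P fun i j hij ↦ ?_
  fin_cases i <;> fin_cases j
  all_goals first | exact absurd rfl hij | exact hdisj | exact hdisj.symm

theorem K2_join_contains_two_disjoint_paths (l : ℕ) (hl : 4 ≤ l)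
    (n : ℕ → ℕ) (hmono : Antitone n) (hbound : ∀ i, n i ≤ l - 1) (h4 : 1 ≤ n 3)
    (h12 : l - 1 ≤ n 0 + n 1) (h34 : l - 1 ≤ n 2 + n 3) :
    ContainsCopy (tPaths 2 l) (cone (cone (pathsUnion n))) :=
  K2_join_contains_two_disjoint_paths_general l n h12 h34
end
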